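/- If Y ~ FM-BS(p, α, β) with β_1 = β_2 = ⋯ = β_G = β, then β/Y and Y/β have the same distribution. -/
import Mathlib

open Real MeasureTheory Filter Topology ProbabilityTheory

noncomputable def stdNormalPdf (x : ℝ) : ℝ := (Real.sqrt (2 * Real.pi))⁻¹ * Real.exp (-x ^ 2 / 2)

noncomputable def stdNormalCdf (x : ℝ) : ℝ := ∫ t in Set.Iic x, stdNormalPdf t

noncomputable def aBS (α β t : ℝ) : ℝ := (Real.sqrt (t / β) - Real.sqrt (β / t)) / α

noncomputable def ABS (α β t : ℝ) : ℝ := t ^ ((-3 : ℝ) / 2) * (t + β) / (2 * α * Real.sqrt β)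

noncomputable def bsPdf (α β t : ℝ) : ℝ := stdNormalPdf (aBS α β t) * ABS α β t

lemma stdNormalPdf_eq : stdNormalPdf = gaussianPDFReal 0 1 := by
  ext x
  simp [stdNormalPdf, ProbabilityTheory.gaussianPDFReal]

lemma stdNormalPdf_integrable : Integrable stdNormalPdf := by
  rw [stdNormalPdf_eq]; exact integrable_gaussianPDFReal 0 1

lemma stdNormalPdf_integral_one : ∫ x, stdNormalPdf x = 1 := by
  rw [stdNormalPdf_eq]; exact integral_gaussianPDFReal_eq_one 0 one_ne_zero

lemma stdNormalPdf_even (x : ℝ) : stdNormalPdf (-x) = stdNormalPdf x := by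
  simp [stdNormalPdf]

lemma stdNormalCdf_neg (t : ℝ) : stdNormalCdf (-t) = 1 - stdNormalCdf t := by
  have h1 : stdNormalCdf (-t) = ∫ x in Set.Ioi t, stdNormalPdf x := by
    have h := integral_comp_neg_Iic (-t) stdNormalPdf
    simp only [stdNormalPdf_even, neg_neg] at h
    rw [stdNormalCdf, h]
  have h2 := intervalIntegral.integral_Iic_add_Ioi (b := t) (f := stdNormalPdf)
    (stdNormalPdf_integrable.integrableOn) (stdNormalPdf_integrable.integrableOn)
  rw [h1, stdNormalCdf]
  rw [stdNormalPdf_integral_one] at h2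
  linarith

lemma stdNormalCdf_continuous : Continuous stdNormalCdf := by
  have h : stdNormalCdf = fun b => stdNormalCdf 0 + ∫ x in (0:ℝ)..b, stdNormalPdf x := by
    ext b
    rw [← intervalIntegral.integral_Iic_sub_Iic stdNormalPdf_integrable.integrableOn
      stdNormalPdf_integrable.integrableOn]
    simp [stdNormalCdf]
  rw [h]
  exact continuous_const.add (stdNormalPdf_integrable.continuous_primitive 0)

lemma aBS_inv {α β x : ℝ} (hβ : 0 < β) (hx : 0 < x) :
    aBS α β (β / x) = - aBS α β (β * x) := by
  have hβ' : β ≠ 0 := hβ.ne'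
  have hx' : x ≠ 0 := hx.ne'
  have h1 : β / x / β = x⁻¹ := by field_simp
  have h2 : β / (β / x) = x := by field_simp
  have h3 : β * x / β = x := by field_simp
  have h4 : β / (β * x) = x⁻¹ := by field_simp
  unfold aBS
  rw [h1, h2, h3, h4]
  ring

lemma aBS_continuousAt {α β : ℝ} {y : ℝ} (hy : 0 < y) :
    ContinuousAt (fun t => aBS α β t) y := by
  unfold aBS
  apply ContinuousAt.div_const
  exact ((Real.continuous_sqrt.continuousAt).comp (continuousAt_id.div_const β)).sub
    ((Real.continuous_sqrt.continuousAt).comp (continuousAt_const.div continuousAt_id hy.ne'))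

theorem fmbs_equal_scale_symmetry {Ω : Type*} [MeasureSpace Ω] (μ : Measure Ω)
    [IsProbabilityMeasure μ]
    (G : ℕ) (p α : Fin G → ℝ) (β : ℝ)
    (hp : ∀ j, 0 ≤ p j) (hpsum : ∑ j, p j = 1)
    (hα : ∀ j, 0 < α j) (hβ : 0 < β) (Y : Ω → ℝ) (hYmeas : Measurable Y)
    (hYpos : ∀ ω, 0 < Y ω)
    (hYdist : ∀ y > 0, (μ {ω | Y ω ≤ y}).toReal = ∑ j, p j * stdNormalCdf (aBS (α j) β y)) :
    Measure.map (fun ω => β / Y ω) μ = Measure.map (fun ω => Y ω / β) μ := by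
  have hmeas1 : Measurable fun ω => β / Y ω := measurable_const.div hYmeas
  have hmeas2 : Measurable fun ω => Y ω / β := hYmeas.div_const β
  have hprob1 : IsProbabilityMeasure (Measure.map (fun ω => β / Y ω) μ) :=
    Measure.isProbabilityMeasure_map hmeas1.aemeasurable
  -- the strict-inequality CDF
  have hlt : ∀ y, 0 < y →
      (μ {ω | Y ω < y}).toReal = ∑ j, p j * stdNormalCdf (aBS (α j) β y) := by
    intro y hy
    set s : ℕ → Set Ω := fun n => {ω | Y ω ≤ y - y / ((n : ℝ) + 2)} with hs
    have hmono : Monotone s := by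
      intro m n hmn ω h
      simp only [hs, Set.mem_setOf_eq] at h ⊢
      have hle : y / ((n : ℝ) + 2) ≤ y / ((m : ℝ) + 2) := by
        apply div_le_div_of_nonneg_left hy.le (by positivity)
        have : (m : ℝ) ≤ n := Nat.cast_le.mpr hmn
        linarith
      linarith
    have hunion : (⋃ n, s n) = {ω | Y ω < y} := by
      ext ω
      simp only [Set.mem_iUnion, hs, Set.mem_setOf_eq]
      constructor
      · rintro ⟨n, h⟩
        have : 0 < y / ((n : ℝ) + 2) := by positivity
        linarith
      · intro h
        have hd : 0 < y - Y ω := sub_pos.2 h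
        obtain ⟨n, hn⟩ := exists_nat_gt (y / (y - Y ω))
        refine ⟨n, ?_⟩
        have h1 : y / (y - Y ω) < (n : ℝ) + 2 := by linarith
        have h2 : y < ((n : ℝ) + 2) * (y - Y ω) := by
          have := (div_lt_iff₀ hd).mp h1
          linarith
        have h3 : y / ((n : ℝ) + 2) < y - Y ω := by
          rw [div_lt_iff₀ (by positivity)]
          linarith
        linarith
    have h1 : Tendsto (fun n => μ (s n)) atTop (𝓝 (μ {ω | Y ω < y})) := by
      rw [← hunion]
      exact tendsto_measure_iUnion_atTop hmono
    have h2 : Tendsto (fun n => (μ (s n)).toReal) atTop (𝓝 ((μ {ω | Y ω < y}).toReal)) :=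
      (ENNReal.tendsto_toReal (measure_ne_top μ _)).comp h1
    have hypos : ∀ n : ℕ, 0 < y - y / ((n : ℝ) + 2) := by
      intro n
      have : y / ((n : ℝ) + 2) < y := div_lt_self hy (by have := Nat.cast_nonneg (α := ℝ) n; linarith)
      linarith
    have h3 : ∀ n : ℕ, (μ (s n)).toReal
        = ∑ j, p j * stdNormalCdf (aBS (α j) β (y - y / ((n : ℝ) + 2))) := by
      intro n
      exact hYdist _ (hypos n)
    have htend : Tendsto (fun n : ℕ => y - y / ((n : ℝ) + 2)) atTop (𝓝 y) := by
      have hden : Tendsto (fun n : ℕ => (n : ℝ) + 2) atTop atTop :=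
        tendsto_atTop_add_const_right _ _ tendsto_natCast_atTop_atTop
      have h0 : Tendsto (fun n : ℕ => y / ((n : ℝ) + 2)) atTop (𝓝 0) :=
        Tendsto.div_atTop tendsto_const_nhds hden
      have := tendsto_const_nhds (x := y) (f := atTop (α := ℕ)) |>.sub h0
      simpa using this
    have h4 : Tendsto (fun n : ℕ => ∑ j, p j * stdNormalCdf (aBS (α j) β (y - y / ((n : ℝ) + 2))))
        atTop (𝓝 (∑ j, p j * stdNormalCdf (aBS (α j) β y))) := by
      apply tendsto_finset_sum
      intro j _
      apply Tendsto.const_mul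
      exact (stdNormalCdf_continuous.continuousAt.comp (aBS_continuousAt hy)).tendsto.comp htend
    rw [funext h3] at h2
    exact tendsto_nhds_unique h2 h4
  refine Measure.ext_of_Iic _ _ (fun x => ?_)
  rw [Measure.map_apply hmeas1 measurableSet_Iic, Measure.map_apply hmeas2 measurableSet_Iic]
  rcases le_or_gt x 0 with hx | hx
  · have e1 : (fun ω => β / Y ω) ⁻¹' Set.Iic x = ∅ := by
      ext ω
      simp only [Set.mem_preimage, Set.mem_Iic, Set.mem_empty_iff_false, iff_false, not_le]
      exact lt_of_le_of_lt hx (div_pos hβ (hYpos ω))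
    have e2 : (fun ω => Y ω / β) ⁻¹' Set.Iic x = ∅ := by
      ext ω
      simp only [Set.mem_preimage, Set.mem_Iic, Set.mem_empty_iff_false, iff_false, not_le]
      exact lt_of_le_of_lt hx (div_pos (hYpos ω) hβ)
    rw [e1, e2]
  · -- x > 0
    have hset1 : (fun ω => β / Y ω) ⁻¹' Set.Iic x = {ω | Y ω < β / x}ᶜ := by
      ext ω
      simp only [Set.mem_preimage, Set.mem_Iic, Set.mem_compl_iff, Set.mem_setOf_eq, not_lt]
      rw [div_le_iff₀ (hYpos ω), div_le_iff₀ hx, mul_comm]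
    have hset2 : (fun ω => Y ω / β) ⁻¹' Set.Iic x = {ω | Y ω ≤ β * x} := by
      ext ω
      simp only [Set.mem_preimage, Set.mem_Iic, Set.mem_setOf_eq]
      rw [div_le_iff₀ hβ, mul_comm]
    rw [hset1, hset2]
    have hmlt : MeasurableSet {ω | Y ω < β / x} := hYmeas measurableSet_Iio
    rw [measure_compl hmlt (measure_ne_top μ _)]
    have hsub : (μ Set.univ - μ {ω | Y ω < β / x}).toReal
        = 1 - (μ {ω | Y ω < β / x}).toReal := by
      rw [ENNReal.toReal_sub_of_le (measure_mono (Set.subset_univ _)) (measure_ne_top μ _)]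
      simp
    have hfin1 : μ Set.univ - μ {ω | Y ω < β / x} ≠ ⊤ :=
      (tsub_le_self.trans_lt (measure_lt_top μ _)).ne
    rw [← ENNReal.toReal_eq_toReal_iff' hfin1 (measure_ne_top μ _), hsub,
      hlt _ (by positivity), hYdist _ (by positivity)]
    have hkey : ∀ j, stdNormalCdf (aBS (α j) β (β / x))
        = 1 - stdNormalCdf (aBS (α j) β (β * x)) := fun j => by
      rw [aBS_inv hβ hx, stdNormalCdf_neg]
    simp only [hkey, mul_sub, mul_one, Finset.sum_sub_distrib, hpsum]
    ring
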